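/- Let u : ℝ² → ℝ be twice continuously differentiable on ℝ² \ {0} and positively homogeneous of degree zero, i.e. u(t • x) = u(x) for all t > 0 and all x ≠ 0. Let p ∈ ℝ² with ‖p‖ = 1 and let p^⊥ denote the rotation of p by π/2 (so ‖p^⊥‖ = 1 and ⟨p, p^⊥⟩ = 0). Then the Euclidean Laplacian of u at p equals the second derivative of the angular restriction: (∂²u/∂x₁²)(p) + (∂²u/∂x₂²)(p) = g''(0), where g(s) = u(cos(s) • p + sin(s) • p^⊥). That is, for functions extended to be constant in the direction normal to the unit circle, the ambient Laplacian restricted to the circle recovers the Laplace–Beltrami operator (the second arc-length derivative). -/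

import Mathlib

set_option maxHeartbeats 1000000


/-- For `u : ℝ² → ℝ` twice continuously differentiable away from the origin and
positively homogeneous of degree zero, and `p` a unit vector with `p^⊥` its rotation
by `π/2`, the Euclidean Laplacian of `u` at `p` (sum of the two second coordinate
partial derivatives) equals `g''(0)`, where `g(s) = u (cos s • p + sin s • p^⊥)` is the
angular (arc-length) restriction of `u` to the unit circle. -/
theorem stmt_3 (u : EuclideanSpace ℝ (Fin 2) → ℝ)
    (hu : ContDiffOn ℝ 2 u {0}ᶜ)
    (hhom : ∀ t : ℝ, 0 < t → ∀ x : EuclideanSpace ℝ (Fin 2), x ≠ 0 → u (t • x) = u x)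
    (p : EuclideanSpace ℝ (Fin 2)) (hp : ‖p‖ = 1)
    (q : EuclideanSpace ℝ (Fin 2))
    (hq : q = (WithLp.equiv 2 (Fin 2 → ℝ)).symm ![-(p 1), p 0])
    (g : ℝ → ℝ) (hg : g = fun s => u (Real.cos s • p + Real.sin s • q)) :
    (∑ i : Fin 2,
        fderiv ℝ (fun y => fderiv ℝ u y (EuclideanSpace.single i 1)) p
          (EuclideanSpace.single i 1)) =
      deriv (deriv g) 0 := by
  have hp0 : p ≠ 0 := by
    intro h; rw [h, norm_zero] at hp; norm_num at hp
  have hp2 : p 0 ^ 2 + p 1 ^ 2 = 1 := by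
    have h := congrArg (· ^ 2) hp
    rw [EuclideanSpace.norm_eq] at h
    simp only [one_pow] at h
    rw [Real.sq_sqrt (by positivity)] at h
    simpa [Fin.sum_univ_two, sq_abs] using h
  have hca : ∀ x : EuclideanSpace ℝ (Fin 2), x ≠ 0 → ContDiffAt ℝ 2 u x := fun x hx =>
    hu.contDiffAt (isOpen_compl_singleton.mem_nhds hx)
  have hdiff : ∀ x : EuclideanSpace ℝ (Fin 2), x ≠ 0 → DifferentiableAt ℝ u x := fun x hx =>
    (hca x hx).differentiableAt (by norm_num)
  have hf1 : ContDiffAt ℝ 1 (fderiv ℝ u) p := (hca p hp0).fderiv_right (by norm_num)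
  set H := fderiv ℝ (fderiv ℝ u) p with hHdef
  have hHd : HasFDerivAt (fderiv ℝ u) H p :=
    (hf1.differentiableAt (by norm_num)).hasFDerivAt
  -- Euler: radial derivative vanishes
  have hEuler : ∀ t : ℝ, 0 < t → fderiv ℝ u (t • p) p = 0 := by
    intro t ht
    have hc : HasDerivAt (fun s : ℝ => s • p) p t := by
      simpa using (hasDerivAt_id t).smul_const p
    have h1 : HasDerivAt (fun s : ℝ => u (s • p)) (fderiv ℝ u (t • p) p) t :=
      (hdiff _ (smul_ne_zero ht.ne' hp0)).hasFDerivAt.comp_hasDerivAt t hc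
    have h2 : HasDerivAt (fun s : ℝ => u (s • p)) 0 t := by
      have hev : (fun s : ℝ => u (s • p)) =ᶠ[nhds t] (fun _ => u p) := by
        filter_upwards [eventually_gt_nhds ht] with s hs
        exact hhom s hs p hp0
      exact (hasDerivAt_const t (u p)).congr_of_eventuallyEq hev
    exact h1.unique h2
  have hDup : fderiv ℝ u p p = 0 := by
    simpa using hEuler 1 one_pos
  -- second derivative formula
  have hsnd : ∀ v : EuclideanSpace ℝ (Fin 2),
      HasFDerivAt (fun y => fderiv ℝ u y v)
        ((ContinuousLinearMap.apply ℝ ℝ v).comp H) p :=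
    fun v => (ContinuousLinearMap.apply ℝ ℝ v).hasFDerivAt.comp p hHd
  -- H p p = 0
  have hHpp : H p p = 0 := by
    have hc : HasDerivAt (fun s : ℝ => s • p) p 1 := by
      simpa using (hasDerivAt_id (1:ℝ)).smul_const p
    have h1 : HasDerivAt (fun t : ℝ => fderiv ℝ u (t • p) p) (H p p) 1 := by
      have hs' : HasFDerivAt (fun y => fderiv ℝ u y p)
          ((ContinuousLinearMap.apply ℝ ℝ p).comp H) ((1:ℝ) • p) := by
        rw [one_smul]; exact hsnd p
      have := hs'.comp_hasDerivAt 1 hc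
      exact this
    have h2 : HasDerivAt (fun t : ℝ => fderiv ℝ u (t • p) p) 0 1 := by
      have hev : (fun t : ℝ => fderiv ℝ u (t • p) p) =ᶠ[nhds (1:ℝ)] (fun _ => 0) := by
        filter_upwards [eventually_gt_nhds one_pos] with s hs
        exact hEuler s hs
      exact (hasDerivAt_const 1 (0:ℝ)).congr_of_eventuallyEq hev
    exact h1.unique h2
  -- LHS
  have hLHS : (∑ i : Fin 2,
      fderiv ℝ (fun y => fderiv ℝ u y (EuclideanSpace.single i 1)) p
        (EuclideanSpace.single i 1)) = H q q := by
    have hfd : ∀ v w : EuclideanSpace ℝ (Fin 2),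
        fderiv ℝ (fun y => fderiv ℝ u y v) p w = H w v := by
      intro v w
      rw [(hsnd v).fderiv]
      rfl
    have hq0 : q 0 = -(p 1) := by rw [hq]; rfl
    have hq1 : q 1 = p 0 := by rw [hq]; rfl
    have he : ∀ i : Fin 2, (EuclideanSpace.single i (1:ℝ)) = p i • p + q i • q := by
      intro i
      ext j
      fin_cases i <;> fin_cases j <;>
        simp only [EuclideanSpace.single_apply, PiLp.add_apply, PiLp.smul_apply, smul_eq_mul,
          hq0, hq1, Fin.mk_zero, Fin.mk_one, Fin.isValue, if_true, if_false] <;>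
        norm_num <;> nlinarith [hp2]
    rw [Fin.sum_univ_two, hfd, hfd, he 0, he 1]
    simp only [map_add, map_smul, ContinuousLinearMap.add_apply,
      ContinuousLinearMap.smul_apply, smul_eq_mul]
    rw [hq0, hq1, hHpp]
    ring_nf
    linear_combination (H q q) * hp2
  -- RHS
  have hRHS : deriv (deriv g) 0 = H q q := by
    subst hg
    set γ : ℝ → EuclideanSpace ℝ (Fin 2) := fun s => Real.cos s • p + Real.sin s • q with hγ
    have hγ0 : γ 0 = p := by simp [hγ]
    have hγd : ∀ s, HasDerivAt γ ((-Real.sin s) • p + Real.cos s • q) s := fun s =>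
      ((Real.hasDerivAt_cos s).smul_const p).add ((Real.hasDerivAt_sin s).smul_const q)
    have hγc : Continuous γ := by
      exact (Real.continuous_cos.smul continuous_const).add (Real.continuous_sin.smul continuous_const)
    have hne : ∀ᶠ s in nhds (0:ℝ), γ s ≠ 0 := by
      have hmem : {0}ᶜ ∈ nhds (γ 0) := by
        rw [hγ0]; exact isOpen_compl_singleton.mem_nhds hp0
      exact hγc.continuousAt.preimage_mem_nhds hmem
    have hder : (deriv (fun s => u (γ s))) =ᶠ[nhds (0:ℝ)]
        (fun s => fderiv ℝ u (γ s) ((-Real.sin s) • p + Real.cos s • q)) := by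
      filter_upwards [hne] with s hs
      exact ((hdiff (γ s) hs).hasFDerivAt.comp_hasDerivAt s (hγd s)).deriv
    rw [hder.deriv_eq]
    have hHd' : HasFDerivAt (fderiv ℝ u) H (γ 0) := hγ0.symm ▸ hHd
    have hγ'0 : HasDerivAt γ q 0 := by
      have := hγd 0
      simpa using this
    have hA : HasDerivAt (fun s => fderiv ℝ u (γ s)) (H q) 0 :=
      hHd'.comp_hasDerivAt 0 hγ'0
    have hb : HasDerivAt (fun s : ℝ => (-Real.sin s) • p + Real.cos s • q)
        ((-Real.cos 0) • p + (-Real.sin 0) • q) 0 :=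
      (((Real.hasDerivAt_sin 0).neg).smul_const p).add
        ((Real.hasDerivAt_cos 0).smul_const q)
    have hG := hA.clm_apply hb
    rw [hG.deriv]
    have hb0 : (-Real.sin 0) • p + Real.cos 0 • q = q := by simp
    rw [hb0, hγ0]
    simp [hDup, map_add, map_smul, map_neg]
  rw [hLHS, hRHS]
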